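/- arXiv:2206.09658 — 2 statements merged into one kernel-verified Lean document; each statement's English description precedes it below -/
import Mathlib

section
/- Let (C, E, s) be an n-exangulated category and F : C → A a half exact functor. If δ ∈ E^F_R(X_{n+1}, X₀) and a₀ : X₀ → Y₀ is any morphism, then (a₀)_* δ ∈ E^F_R(X_{n+1}, Y₀). That is, E^F_R is stable under pushforward along morphisms in the first (covariant) variable. -/
open CategoryTheory CategoryTheory.Limits Opposite

universe v u v₂ u₂

/-- A candidate `n`-exangle: an `(n+2)`-term sequence of composable morphisms in `C`,
in degrees `0, 1, …, n+1`. -/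
structure NExCplx (C : Type u) [Category.{v} C] (n : ℕ) where
  X : Fin (n + 2) → C
  d : ∀ i : Fin (n + 1), X i.castSucc ⟶ X i.succ

namespace NEx

variable {C : Type u} [Category.{v} C]

/-- The degree `0` index. -/
abbrev fin0 (n : ℕ) : Fin (n + 2) := ⟨0, by omega⟩

/-- The degree `n+1` index. -/
abbrev finLast (n : ℕ) : Fin (n + 2) := Fin.last (n + 1)

/-- The group of `E`-extensions attached to a candidate `n`-exangle:
`E(X_{n+1}, X₀)`. -/
abbrev NEext (E : Cᵒᵖ ⥤ C ⥤ AddCommGrpCat.{v}) {n : ℕ} (Z : NExCplx C n) : Type v :=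
  (E.obj (op (Z.X (finLast n)))).obj (Z.X (fin0 n))

/-- Pushforward `a_*δ` of an extension `δ ∈ E(X, A)` along `a : A ⟶ A'`. -/
def pushf (E : Cᵒᵖ ⥤ C ⥤ AddCommGrpCat.{v}) {A A' X : C} (a : A ⟶ A')
    (δ : (E.obj (op X)).obj A) : (E.obj (op X)).obj A' :=
  ((E.obj (op X)).map a) δ

/-- Pullback `c^*δ` of an extension `δ ∈ E(X, A)` along `c : X' ⟶ X`. -/
def pullb (E : Cᵒᵖ ⥤ C ⥤ AddCommGrpCat.{v}) {A X X' : C} (c : X' ⟶ X)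
    (δ : (E.obj (op X)).obj A) : (E.obj (op X')).obj A :=
  ((E.map c.op).app A) δ

/-- Transport of an extension along equalities of its end objects. -/
def extCast (E : Cᵒᵖ ⥤ C ⥤ AddCommGrpCat.{v}) {A A' X X' : C} (hA : A = A') (hX : X = X')
    (δ : (E.obj (op X)).obj A) : (E.obj (op X')).obj A' :=
  pullb E (eqToHom hX.symm) (pushf E (eqToHom hA) δ)

/-- A morphism of (candidate) `n`-exangles `⟨Z, δ⟩ → ⟨W, ρ⟩`. -/
structure ExangleMor (E : Cᵒᵖ ⥤ C ⥤ AddCommGrpCat.{v}) {n : ℕ} (Z W : NExCplx C n)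
    (δ : NEext E Z) (ρ : NEext E W) where
  app : ∀ i : Fin (n + 2), Z.X i ⟶ W.X i
  comm : ∀ i : Fin (n + 1), Z.d i ≫ app i.succ = app i.castSucc ≫ W.d i
  compat : pushf E (app (fin0 n)) δ = pullb E (app (finLast n)) ρ


variable [Preadditive C] [HasBinaryBiproducts C]

/-- Objects of the total complex (mapping cone) of a ladder with rows `A`, `B`. -/
noncomputable def coneX (n : ℕ) (A B : Fin (n + 1) → C) (i : Fin (n + 2)) : C :=
  if _ : i.val = 0 then A ⟨0, Nat.succ_pos n⟩
  else if _ : i.val ≤ n then A ⟨i.val, by omega⟩ ⊞ B ⟨i.val - 1, by omega⟩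
  else B ⟨n, Nat.lt_succ_self n⟩

lemma coneX_zero (n : ℕ) (A B : Fin (n + 1) → C) :
    coneX n A B (fin0 n) = A ⟨0, Nat.succ_pos n⟩ := by
  simp [coneX, fin0]

lemma coneX_mid (n : ℕ) (A B : Fin (n + 1) → C) (i : Fin (n + 2))
    (h0 : i.val ≠ 0) (h1 : i.val ≤ n) :
    coneX n A B i = (A ⟨i.val, by omega⟩ ⊞ B ⟨i.val - 1, by omega⟩) := by
  rw [coneX, dif_neg h0, dif_pos h1]

lemma coneX_last (n : ℕ) (A B : Fin (n + 1) → C) :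
    coneX n A B (finLast n) = B ⟨n, Nat.lt_succ_self n⟩ := by
  rw [coneX, dif_neg (by simp [finLast]), dif_neg (by simp [finLast])]

/-- Differentials of the mapping cone of a ladder:
`d₀ = (-f₀, φ₀)ᵀ`, `dᵢ = [-fᵢ, 0; φᵢ, g_{i-1}]`, `dₙ = (φₙ, g_{n-1})`. -/
noncomputable def coneD (n : ℕ) (A B : Fin (n + 1) → C)
    (f : ∀ i : Fin n, A i.castSucc ⟶ A i.succ)
    (g : ∀ i : Fin n, B i.castSucc ⟶ B i.succ)
    (φ : ∀ i : Fin (n + 1), A i ⟶ B i)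
    (i : Fin (n + 1)) : coneX n A B i.castSucc ⟶ coneX n A B i.succ :=
  if h0 : i.val = 0 then
    if hn : n = 0 then
      eqToHom (show coneX n A B i.castSucc = A ⟨0, Nat.succ_pos n⟩ by
          simp [coneX, h0]) ≫
        φ ⟨0, Nat.succ_pos n⟩ ≫
        eqToHom (show B ⟨0, Nat.succ_pos n⟩ = coneX n A B i.succ by
          subst hn
          rw [coneX, dif_neg (by simp only [Fin.val_succ]; omega),
            dif_neg (by simp only [Fin.val_succ]; omega)])
    else
      eqToHom (show coneX n A B i.castSucc = A ⟨i.val, i.isLt⟩ by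
          rw [coneX, dif_pos (show (i.castSucc).val = 0 from h0)]
          exact congrArg A (Fin.ext h0.symm)) ≫
        biprod.lift (-(f ⟨i.val, by omega⟩)) (φ ⟨i.val, i.isLt⟩) ≫
        eqToHom (show (A ⟨i.val + 1, by omega⟩ ⊞ B ⟨i.val + 1 - 1, by omega⟩ : C)
            = coneX n A B i.succ by
          rw [coneX, dif_neg (by simp only [Fin.val_succ]; omega),
            dif_pos (by simp only [Fin.val_succ]; omega)]
          rfl)
  else if hv : i.val < n then
    eqToHom (show coneX n A B i.castSucc
          = (A ⟨i.val, i.isLt⟩ ⊞ B ⟨i.val - 1, by omega⟩) by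
        rw [coneX, dif_neg (show ¬(i.castSucc).val = 0 from h0),
          dif_pos (show (i.castSucc).val ≤ n by simp only [Fin.coe_castSucc]; omega)]
        rfl) ≫
      biprod.lift (biprod.desc (-(f ⟨i.val, hv⟩)) 0)
        (biprod.desc (φ ⟨i.val, i.isLt⟩)
          (g ⟨i.val - 1, by omega⟩ ≫
            eqToHom (congrArg B (Fin.ext (show i.val - 1 + 1 = i.val by omega))))) ≫
      eqToHom (show (A ⟨i.val + 1, by omega⟩ ⊞ B ⟨i.val + 1 - 1, by omega⟩ : C)
          = coneX n A B i.succ by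
        rw [coneX, dif_neg (by simp only [Fin.val_succ]; omega),
          dif_pos (by simp only [Fin.val_succ]; omega)]
        rfl)
  else
    eqToHom (show coneX n A B i.castSucc
          = (A ⟨i.val, i.isLt⟩ ⊞ B ⟨i.val - 1, by have := i.isLt; omega⟩) by
        rw [coneX, dif_neg (show ¬(i.castSucc).val = 0 from h0),
          dif_pos (show (i.castSucc).val ≤ n by
            simp only [Fin.coe_castSucc]; have := i.isLt; omega)]
        rfl) ≫
      biprod.desc (φ ⟨i.val, i.isLt⟩)
        (g ⟨i.val - 1, by have := i.isLt; omega⟩ ≫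
          eqToHom (congrArg B (Fin.ext (show i.val - 1 + 1 = i.val by omega)))) ≫
      eqToHom (show B ⟨i.val, i.isLt⟩ = coneX n A B i.succ by
        rw [coneX, dif_neg (by simp only [Fin.val_succ]; omega),
          dif_neg (by simp only [Fin.val_succ]; have := i.isLt; omega)]
        exact congrArg B (Fin.ext (show (i.val : ℕ) = n by have := i.isLt; omega)))

/-- The mapping cone (total complex) of a ladder, as a candidate `n`-exangle. -/
noncomputable def coneCplx (n : ℕ) (A B : Fin (n + 1) → C)
    (f : ∀ i : Fin n, A i.castSucc ⟶ A i.succ)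
    (g : ∀ i : Fin n, B i.castSucc ⟶ B i.succ)
    (φ : ∀ i : Fin (n + 1), A i ⟶ B i) : NExCplx C n :=
  ⟨coneX n A B, coneD n A B f g φ⟩


/-- Objects of the total complex (mapping cocone) of a ladder with rows `A`, `B`. -/
noncomputable def coconeX (n : ℕ) (A B : Fin (n + 1) → C) (i : Fin (n + 2)) : C :=
  if _ : i.val = 0 then A ⟨0, Nat.succ_pos n⟩
  else if _ : i.val ≤ n then B ⟨i.val - 1, by omega⟩ ⊞ A ⟨i.val, by omega⟩
  else B ⟨n, Nat.lt_succ_self n⟩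

/-- Differentials of the mapping cocone of a ladder:
`d₀ = (φ₀, -f₀)ᵀ`, `dᵢ = [g_{i-1}, φᵢ; 0, -fᵢ]`, `dₙ = (g_{n-1}, φₙ)`. -/
noncomputable def coconeD (n : ℕ) (A B : Fin (n + 1) → C)
    (f : ∀ i : Fin n, A i.castSucc ⟶ A i.succ)
    (g : ∀ i : Fin n, B i.castSucc ⟶ B i.succ)
    (φ : ∀ i : Fin (n + 1), A i ⟶ B i)
    (i : Fin (n + 1)) : coconeX n A B i.castSucc ⟶ coconeX n A B i.succ :=
  if h0 : i.val = 0 then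
    if hn : n = 0 then
      eqToHom (show coconeX n A B i.castSucc = A ⟨0, Nat.succ_pos n⟩ by
          simp [coconeX, h0]) ≫
        φ ⟨0, Nat.succ_pos n⟩ ≫
        eqToHom (show B ⟨0, Nat.succ_pos n⟩ = coconeX n A B i.succ by
          subst hn
          rw [coconeX, dif_neg (by simp only [Fin.val_succ]; omega),
            dif_neg (by simp only [Fin.val_succ]; omega)])
    else
      eqToHom (show coconeX n A B i.castSucc = A ⟨i.val, i.isLt⟩ by
          rw [coconeX, dif_pos (show (i.castSucc).val = 0 from h0)]
          exact congrArg A (Fin.ext h0.symm)) ≫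
        biprod.lift (φ ⟨i.val, i.isLt⟩) (-(f ⟨i.val, by omega⟩)) ≫
        eqToHom (show (B ⟨i.val + 1 - 1, by omega⟩ ⊞ A ⟨i.val + 1, by omega⟩ : C)
            = coconeX n A B i.succ by
          rw [coconeX, dif_neg (by simp only [Fin.val_succ]; omega),
            dif_pos (by simp only [Fin.val_succ]; omega)]
          rfl)
  else if hv : i.val < n then
    eqToHom (show coconeX n A B i.castSucc
          = (B ⟨i.val - 1, by omega⟩ ⊞ A ⟨i.val, i.isLt⟩) by
        rw [coconeX, dif_neg (show ¬(i.castSucc).val = 0 from h0),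
          dif_pos (show (i.castSucc).val ≤ n by simp only [Fin.coe_castSucc]; omega)]
        rfl) ≫
      biprod.lift
        (biprod.desc (g ⟨i.val - 1, by omega⟩ ≫
            eqToHom (congrArg B (Fin.ext (show i.val - 1 + 1 = i.val by omega))))
          (φ ⟨i.val, i.isLt⟩))
        (biprod.desc 0 (-(f ⟨i.val, hv⟩))) ≫
      eqToHom (show (B ⟨i.val + 1 - 1, by omega⟩ ⊞ A ⟨i.val + 1, by omega⟩ : C)
          = coconeX n A B i.succ by
        rw [coconeX, dif_neg (by simp only [Fin.val_succ]; omega),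
          dif_pos (by simp only [Fin.val_succ]; omega)]
        rfl)
  else
    eqToHom (show coconeX n A B i.castSucc
          = (B ⟨i.val - 1, by have := i.isLt; omega⟩ ⊞ A ⟨i.val, i.isLt⟩) by
        rw [coconeX, dif_neg (show ¬(i.castSucc).val = 0 from h0),
          dif_pos (show (i.castSucc).val ≤ n by
            simp only [Fin.coe_castSucc]; have := i.isLt; omega)]
        rfl) ≫
      biprod.desc
        (g ⟨i.val - 1, by have := i.isLt; omega⟩ ≫
          eqToHom (congrArg B (Fin.ext (show i.val - 1 + 1 = i.val by omega))))
        (φ ⟨i.val, i.isLt⟩) ≫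
      eqToHom (show B ⟨i.val, i.isLt⟩ = coconeX n A B i.succ by
        rw [coconeX, dif_neg (by simp only [Fin.val_succ]; omega),
          dif_neg (by simp only [Fin.val_succ]; have := i.isLt; omega)]
        exact congrArg B (Fin.ext (show (i.val : ℕ) = n by have := i.isLt; omega)))

noncomputable def coconeCplx (n : ℕ) (A B : Fin (n + 1) → C)
    (f : ∀ i : Fin n, A i.castSucc ⟶ A i.succ)
    (g : ∀ i : Fin n, B i.castSucc ⟶ B i.succ)
    (φ : ∀ i : Fin (n + 1), A i ⟶ B i) : NExCplx C n :=
  ⟨coconeX n A B, coconeD n A B f g φ⟩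


/-- Differentials of the total complex in the second sign convention:
`d₀ = (-f₀, φ₀)ᵀ`, `dᵢ = [fᵢ, 0; (-1)^{i+1}φᵢ, g_{i-1}]`,
`dₙ = ((-1)^{n+1}φₙ, g_{n-1})`. -/
noncomputable def coneD' (n : ℕ) (A B : Fin (n + 1) → C)
    (f : ∀ i : Fin n, A i.castSucc ⟶ A i.succ)
    (g : ∀ i : Fin n, B i.castSucc ⟶ B i.succ)
    (φ : ∀ i : Fin (n + 1), A i ⟶ B i)
    (i : Fin (n + 1)) : coneX n A B i.castSucc ⟶ coneX n A B i.succ :=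
  if h0 : i.val = 0 then
    if hn : n = 0 then
      eqToHom (show coneX n A B i.castSucc = A ⟨0, Nat.succ_pos n⟩ by
          simp [coneX, h0]) ≫
        φ ⟨0, Nat.succ_pos n⟩ ≫
        eqToHom (show B ⟨0, Nat.succ_pos n⟩ = coneX n A B i.succ by
          subst hn
          rw [coneX, dif_neg (by simp only [Fin.val_succ]; omega),
            dif_neg (by simp only [Fin.val_succ]; omega)])
    else
      eqToHom (show coneX n A B i.castSucc = A ⟨i.val, i.isLt⟩ by
          rw [coneX, dif_pos (show (i.castSucc).val = 0 from h0)]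
          exact congrArg A (Fin.ext h0.symm)) ≫
        biprod.lift (-(f ⟨i.val, by omega⟩)) (φ ⟨i.val, i.isLt⟩) ≫
        eqToHom (show (A ⟨i.val + 1, by omega⟩ ⊞ B ⟨i.val + 1 - 1, by omega⟩ : C)
            = coneX n A B i.succ by
          rw [coneX, dif_neg (by simp only [Fin.val_succ]; omega),
            dif_pos (by simp only [Fin.val_succ]; omega)]
          rfl)
  else if hv : i.val < n then
    eqToHom (show coneX n A B i.castSucc
          = (A ⟨i.val, i.isLt⟩ ⊞ B ⟨i.val - 1, by omega⟩) by
        rw [coneX, dif_neg (show ¬(i.castSucc).val = 0 from h0),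
          dif_pos (show (i.castSucc).val ≤ n by simp only [Fin.coe_castSucc]; omega)]
        rfl) ≫
      biprod.lift (biprod.desc (f ⟨i.val, hv⟩) 0)
        (biprod.desc (((-1 : ℤ) ^ (i.val + 1)) • φ ⟨i.val, i.isLt⟩)
          (g ⟨i.val - 1, by omega⟩ ≫
            eqToHom (congrArg B (Fin.ext (show i.val - 1 + 1 = i.val by omega))))) ≫
      eqToHom (show (A ⟨i.val + 1, by omega⟩ ⊞ B ⟨i.val + 1 - 1, by omega⟩ : C)
          = coneX n A B i.succ by
        rw [coneX, dif_neg (by simp only [Fin.val_succ]; omega),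
          dif_pos (by simp only [Fin.val_succ]; omega)]
        rfl)
  else
    eqToHom (show coneX n A B i.castSucc
          = (A ⟨i.val, i.isLt⟩ ⊞ B ⟨i.val - 1, by have := i.isLt; omega⟩) by
        rw [coneX, dif_neg (show ¬(i.castSucc).val = 0 from h0),
          dif_pos (show (i.castSucc).val ≤ n by
            simp only [Fin.coe_castSucc]; have := i.isLt; omega)]
        rfl) ≫
      biprod.desc (((-1 : ℤ) ^ (i.val + 1)) • φ ⟨i.val, i.isLt⟩)
        (g ⟨i.val - 1, by have := i.isLt; omega⟩ ≫
          eqToHom (congrArg B (Fin.ext (show i.val - 1 + 1 = i.val by omega)))) ≫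
      eqToHom (show B ⟨i.val, i.isLt⟩ = coneX n A B i.succ by
        rw [coneX, dif_neg (by simp only [Fin.val_succ]; omega),
          dif_neg (by simp only [Fin.val_succ]; have := i.isLt; omega)]
        exact congrArg B (Fin.ext (show (i.val : ℕ) = n by have := i.isLt; omega)))



lemma coconeX_zero (n : ℕ) (A B : Fin (n + 1) → C) :
    coconeX n A B (fin0 n) = A ⟨0, Nat.succ_pos n⟩ := by
  simp [coconeX, fin0]

lemma coconeX_last (n : ℕ) (A B : Fin (n + 1) → C) :
    coconeX n A B (finLast n) = B ⟨n, Nat.lt_succ_self n⟩ := by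
  rw [coconeX, dif_neg (by simp [finLast]), dif_neg (by simp [finLast])]

variable [HasZeroObject C]

/-- A ladder (with rows `A`, `B`, horizontal maps `f`, `g` and vertical maps `φ`)
is a homotopy cartesian diagram with differential `dl` if its total complex
(mapping cone) together with `dl` is a distinguished `n`-exangle. -/
noncomputable def IsHomotopyCartesian (n : ℕ) (E : Cᵒᵖ ⥤ C ⥤ AddCommGrpCat.{v})
    (dist : ∀ Z : NExCplx C n, NEext E Z → Prop)
    (A B : Fin (n + 1) → C)
    (f : ∀ i : Fin n, A i.castSucc ⟶ A i.succ)
    (g : ∀ i : Fin n, B i.castSucc ⟶ B i.succ)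
    (φ : ∀ i : Fin (n + 1), A i ⟶ B i)
    (dl : (E.obj (op (B ⟨n, Nat.lt_succ_self n⟩))).obj (A ⟨0, Nat.succ_pos n⟩)) : Prop :=
  dist (coneCplx n A B f g φ)
    (extCast E (coneX_zero n A B).symm (coneX_last n A B).symm dl)

/-- The dual notion, using the mapping cocone. -/
noncomputable def IsCoHomotopyCartesian (n : ℕ) (E : Cᵒᵖ ⥤ C ⥤ AddCommGrpCat.{v})
    (dist : ∀ Z : NExCplx C n, NEext E Z → Prop)
    (A B : Fin (n + 1) → C)
    (f : ∀ i : Fin n, A i.castSucc ⟶ A i.succ)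
    (g : ∀ i : Fin n, B i.castSucc ⟶ B i.succ)
    (φ : ∀ i : Fin (n + 1), A i ⟶ B i)
    (dl : (E.obj (op (B ⟨n, Nat.lt_succ_self n⟩))).obj (A ⟨0, Nat.succ_pos n⟩)) : Prop :=
  dist (coconeCplx n A B f g φ)
    (extCast E (coconeX_zero n A B).symm (coconeX_last n A B).symm dl)

/-- `fm` is an inflation: it occurs as the `0`-th differential of some distinguished
`n`-exangle. -/
def IsInflationFor (n : ℕ) (E : Cᵒᵖ ⥤ C ⥤ AddCommGrpCat.{v})
    (dist : ∀ Z : NExCplx C n, NEext E Z → Prop) {X Y : C} (fm : X ⟶ Y) : Prop :=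
  ∃ (Z : NExCplx C n) (δ : NEext E Z), dist Z δ ∧
    ∃ (h1 : Z.X (fin0 n) = X) (h2 : Z.X (Fin.succ ⟨0, Nat.succ_pos n⟩) = Y),
      Z.d ⟨0, Nat.succ_pos n⟩ = eqToHom h1 ≫ fm ≫ eqToHom h2.symm

/-- `gm` is a deflation: it occurs as the `n`-th differential of some distinguished
`n`-exangle. -/
def IsDeflationFor (n : ℕ) (E : Cᵒᵖ ⥤ C ⥤ AddCommGrpCat.{v})
    (dist : ∀ Z : NExCplx C n, NEext E Z → Prop) {X Y : C} (gm : X ⟶ Y) : Prop :=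
  ∃ (Z : NExCplx C n) (δ : NEext E Z), dist Z δ ∧
    ∃ (h1 : Z.X (Fin.castSucc (Fin.last n)) = X) (h2 : Z.X (finLast n) = Y),
      Z.d (Fin.last n) = eqToHom h1 ≫ gm ≫ eqToHom h2.symm

/-- A pre-`n`-exangulated category structure on the additive category `C`:
an additive bifunctor `E : Cᵒᵖ × C → Ab` together with an exact realization,
recorded by the predicate `Distinguished` singling out the distinguished
`n`-exangles, subject to exactness of the associated Hom-sequences (R1),
existence of realizations, lifting of morphisms of extensions (R0), and
closure of inflations and deflations under composition (EA1). -/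
structure PreNExangulated (C : Type u) [Category.{v} C] [Preadditive C]
    [HasZeroObject C] [HasBinaryBiproducts C] (n : ℕ) where
  E : Cᵒᵖ ⥤ C ⥤ AddCommGrpCat.{v}
  Distinguished : ∀ Z : NExCplx C n, NEext E Z → Prop
  exact_contra_mid : ∀ ⦃Z : NExCplx C n⦄ ⦃δ : NEext E Z⦄, Distinguished Z δ →
    ∀ (W : C) (i : Fin n),
      Function.Exact (fun h : W ⟶ Z.X i.castSucc.castSucc => h ≫ Z.d i.castSucc)
        (fun h : W ⟶ Z.X i.succ.castSucc => h ≫ Z.d i.succ)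
  exact_contra_last : ∀ ⦃Z : NExCplx C n⦄ ⦃δ : NEext E Z⦄, Distinguished Z δ →
    ∀ (W : C),
      Function.Exact (fun h : W ⟶ Z.X (Fin.castSucc (Fin.last n)) => h ≫ Z.d (Fin.last n))
        (fun h : W ⟶ Z.X (finLast n) => pullb E h δ)
  exact_cov_mid : ∀ ⦃Z : NExCplx C n⦄ ⦃δ : NEext E Z⦄, Distinguished Z δ →
    ∀ (W : C) (i : Fin n),
      Function.Exact (fun h : Z.X i.succ.succ ⟶ W => Z.d i.succ ≫ h)
        (fun h : Z.X i.castSucc.succ ⟶ W => Z.d i.castSucc ≫ h)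
  exact_cov_first : ∀ ⦃Z : NExCplx C n⦄ ⦃δ : NEext E Z⦄, Distinguished Z δ →
    ∀ (W : C),
      Function.Exact (fun h : Z.X (Fin.succ ⟨0, Nat.succ_pos n⟩) ⟶ W => Z.d ⟨0, Nat.succ_pos n⟩ ≫ h)
        (fun h : Z.X (fin0 n) ⟶ W => pushf E h δ)
  lift_exists : ∀ ⦃Z W : NExCplx C n⦄ ⦃δ : NEext E Z⦄ ⦃ρ : NEext E W⦄,
    Distinguished Z δ → Distinguished W ρ →
    ∀ (a : Z.X (fin0 n) ⟶ W.X (fin0 n)) (c : Z.X (finLast n) ⟶ W.X (finLast n)),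
      pushf E a δ = pullb E c ρ →
      ∃ φ : ExangleMor E Z W δ ρ, φ.app (fin0 n) = a ∧ φ.app (finLast n) = c
  realize : ∀ (A Xl : C) (δ : (E.obj (op Xl)).obj A),
    ∃ (Z : NExCplx C n) (h0 : Z.X (fin0 n) = A) (hl : Z.X (finLast n) = Xl),
      Distinguished Z (extCast E h0.symm hl.symm δ)
  infl_comp : ∀ {X Y W : C} (f : X ⟶ Y) (g : Y ⟶ W),
    IsInflationFor n E Distinguished f → IsInflationFor n E Distinguished g →
      IsInflationFor n E Distinguished (f ≫ g)
  defl_comp : ∀ {X Y W : C} (f : X ⟶ Y) (g : Y ⟶ W),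
    IsDeflationFor n E Distinguished f → IsDeflationFor n E Distinguished g →
      IsDeflationFor n E Distinguished (f ≫ g)

/-- The axiom (EA2): a morphism of extensions of the form `(id, c)` between
distinguished `n`-exangles admits a good lift, i.e. one whose mapping cone
together with `(d₀^X)_*ρ` is again a distinguished `n`-exangle. -/
noncomputable def EA2For (n : ℕ) (E : Cᵒᵖ ⥤ C ⥤ AddCommGrpCat.{v})
    (dist : ∀ Z : NExCplx C n, NEext E Z → Prop) : Prop :=
  ∀ (Z W : NExCplx C n) (δ : NEext E Z) (ρ : NEext E W),
    dist Z δ → dist W ρ →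
    ∀ (h0 : Z.X (fin0 n) = W.X (fin0 n)) (c : Z.X (finLast n) ⟶ W.X (finLast n)),
      pushf E (eqToHom h0) δ = pullb E c ρ →
      ∃ φ : ExangleMor E Z W δ ρ,
        φ.app (fin0 n) = eqToHom h0 ∧ φ.app (finLast n) = c ∧
        IsHomotopyCartesian n E dist (fun i => Z.X i.succ) (fun i => W.X i.succ)
          (fun i => Z.d i.succ) (fun i => W.d i.succ) (fun i => φ.app i.succ)
          (pushf E (eqToHom h0.symm ≫ Z.d ⟨0, Nat.succ_pos n⟩) ρ)

/-- The condition (EA2-1): given two distinguished `n`-exangles starting at the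
same object and a morphism `φ₁` compatible with the first differentials, it
extends to a morphism of `n`-exangles `(id, φ₁, φ₂, …, φ_{n+1})` whose induced
ladder (in degrees `1, …, n+1`) is homotopy cartesian with differential
`(f₀)_*δ'`. -/
noncomputable def EA21For (n : ℕ) (E : Cᵒᵖ ⥤ C ⥤ AddCommGrpCat.{v})
    (dist : ∀ Z : NExCplx C n, NEext E Z → Prop) : Prop :=
  ∀ (Z W : NExCplx C n) (δ : NEext E Z) (δ' : NEext E W),
    dist Z δ → dist W δ' →
    ∀ (h0 : Z.X (fin0 n) = W.X (fin0 n))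
      (φ1 : Z.X (Fin.succ ⟨0, Nat.succ_pos n⟩) ⟶ W.X (Fin.succ ⟨0, Nat.succ_pos n⟩)),
      Z.d ⟨0, Nat.succ_pos n⟩ ≫ φ1 = eqToHom h0 ≫ W.d ⟨0, Nat.succ_pos n⟩ →
      ∃ φ : ExangleMor E Z W δ δ',
        φ.app (fin0 n) = eqToHom h0 ∧ φ.app (Fin.succ ⟨0, Nat.succ_pos n⟩) = φ1 ∧
        IsHomotopyCartesian n E dist (fun i => Z.X i.succ) (fun i => W.X i.succ)
          (fun i => Z.d i.succ) (fun i => W.d i.succ) (fun i => φ.app i.succ)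
          (pushf E (eqToHom h0.symm ≫ Z.d ⟨0, Nat.succ_pos n⟩) δ')

/-- The axiom (EA2)ᵒᵖ, dual to (EA2), via mapping cocones. -/
noncomputable def EA2opFor (n : ℕ) (E : Cᵒᵖ ⥤ C ⥤ AddCommGrpCat.{v})
    (dist : ∀ Z : NExCplx C n, NEext E Z → Prop) : Prop :=
  ∀ (W Z : NExCplx C n) (ρ : NEext E W) (δ : NEext E Z),
    dist W ρ → dist Z δ →
    ∀ (hl : W.X (finLast n) = Z.X (finLast n)) (a : W.X (fin0 n) ⟶ Z.X (fin0 n)),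
      pushf E a ρ = pullb E (eqToHom hl) δ →
      ∃ φ : ExangleMor E W Z ρ δ,
        φ.app (fin0 n) = a ∧ φ.app (finLast n) = eqToHom hl ∧
        IsCoHomotopyCartesian n E dist (fun i => W.X i.castSucc) (fun i => Z.X i.castSucc)
          (fun i => W.d i.castSucc) (fun i => Z.d i.castSucc) (fun i => φ.app i.castSucc)
          (pullb E (Z.d (Fin.last n) ≫ eqToHom hl.symm) ρ)

/-- An `n`-exangulated category: a pre-`n`-exangulated category satisfying
(EA2) and (EA2)ᵒᵖ. -/
structure NExangulated (C : Type u) [Category.{v} C] [Preadditive C]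
    [HasZeroObject C] [HasBinaryBiproducts C] (n : ℕ)
    extends PreNExangulated C n where
  ea2 : EA2For n E Distinguished
  ea2op : EA2opFor n E Distinguished

section HalfExact

variable {A : Type u₂} [Category.{v₂} A] [Abelian A]

/-- A functor `F : C → 𝒜` to an abelian category is half exact if it sends every
distinguished `n`-exangle `X₀ → ⋯ → X_{n+1}` to an exact sequence
`FX₀ → ⋯ → FX_{n+1}`. -/
def IsHalfExact {n : ℕ} (N : NExangulated C n) (F : C ⥤ A) : Prop :=
  ∀ ⦃Z : NExCplx C n⦄ ⦃δ : NEext N.E Z⦄, N.Distinguished Z δ → ∀ i : Fin n,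
    ∃ w : F.map (Z.d i.castSucc) ≫ F.map (Z.d i.succ) = 0,
      (ShortComplex.mk (F.map (Z.d i.castSucc)) (F.map (Z.d i.succ)) w).Exact

/-- The subset `E^F_R(X_{n+1}, X₀) ⊆ E(X_{n+1}, X₀)` of extensions all of whose
realizing distinguished `n`-exangles have `F`-epimorphic last differential. -/
def EFR {n : ℕ} (N : NExangulated C n) (F : C ⥤ A) (Xl X0 : C) :
    Set ((N.E.obj (op Xl)).obj X0) :=
  {δ | ∀ (Z : NExCplx C n) (h0 : Z.X (fin0 n) = X0) (hl : Z.X (finLast n) = Xl),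
      N.Distinguished Z (extCast N.E h0.symm hl.symm δ) →
        Epi (F.map (Z.d (Fin.last n)))}

end HalfExact

/-- `gm` is a deflation for the relative structure determined by the subfunctor `S`:
it is the last differential of a distinguished `n`-exangle whose extension lies
in `S`. -/
def IsRelDeflation (n : ℕ) (E : Cᵒᵖ ⥤ C ⥤ AddCommGrpCat.{v})
    (dist : ∀ Z : NExCplx C n, NEext E Z → Prop)
    (S : ∀ Xl X0 : C, Set ((E.obj (op Xl)).obj X0)) {X Y : C} (gm : X ⟶ Y) : Prop :=
  ∃ (Z : NExCplx C n) (δ : NEext E Z), dist Z δ ∧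
    δ ∈ S (Z.X (finLast n)) (Z.X (fin0 n)) ∧
    ∃ (h1 : Z.X (Fin.castSucc (Fin.last n)) = X) (h2 : Z.X (finLast n) = Y),
      Z.d (Fin.last n) = eqToHom h1 ≫ gm ≫ eqToHom h2.symm


end NEx

/-!
By (R0) the morphism of extensions `(a₀, id) : δ → a₀_*δ` lifts to a morphism of `n`-exangles
between any realizations. Its last square `dₙ ≫ id = φₙ ≫ dₙ'` shows that `F dₙ'` is an
epimorphism as soon as `F dₙ` is.
-/

namespace NEx

variable {C : Type u} [Category.{v} C]

lemma pushf_comp (E : Cᵒᵖ ⥤ C ⥤ AddCommGrpCat.{v}) {A A' A'' X : C}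
    (f : A ⟶ A') (g : A' ⟶ A'') (δ : (E.obj (op X)).obj A) :
    pushf E g (pushf E f δ) = pushf E (f ≫ g) δ := by
  simp [pushf]

lemma pullb_comp (E : Cᵒᵖ ⥤ C ⥤ AddCommGrpCat.{v}) {A X X' X'' : C}
    (c : X' ⟶ X) (c' : X'' ⟶ X') (δ : (E.obj (op X)).obj A) :
    pullb E c' (pullb E c δ) = pullb E (c' ≫ c) δ := by
  simp only [pullb, op_comp, E.map_comp]
  rfl

lemma pushf_pullb (E : Cᵒᵖ ⥤ C ⥤ AddCommGrpCat.{v}) {A A' X X' : C}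
    (a : A ⟶ A') (c : X' ⟶ X) (δ : (E.obj (op X)).obj A) :
    pushf E a (pullb E c δ) = pullb E c (pushf E a δ) :=
  (ConcreteCategory.congr_hom ((E.map c.op).naturality a) δ).symm

/-- `(a₀, id)` is a morphism of extensions from a realization of `δ` to one of `a₀_*δ`. -/
lemma pushf_extCast_eq_pullb_extCast_pushf (E : Cᵒᵖ ⥤ C ⥤ AddCommGrpCat.{v})
    {X0 Y0 Xl W0 Wl Z0 Zl : C} (a0 : X0 ⟶ Y0) (δ : (E.obj (op Xl)).obj X0)
    (hW0 : W0 = X0) (hWl : Wl = Xl) (hZ0 : Z0 = Y0) (hZl : Zl = Xl) :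
    pushf E (eqToHom hW0 ≫ a0 ≫ eqToHom hZ0.symm) (extCast E hW0.symm hWl.symm δ)
      = pullb E (eqToHom (hWl.trans hZl.symm))
          (extCast E hZ0.symm hZl.symm (pushf E a0 δ)) := by
  subst hW0 hWl hZ0 hZl
  simp only [extCast, eqToHom_refl, Category.id_comp, Category.comp_id, pushf_comp,
    pullb_comp, pushf_pullb]

lemma ExangleMor.epi_map_d_last {A : Type u₂} [Category.{v₂} A] (F : C ⥤ A)
    {E : Cᵒᵖ ⥤ C ⥤ AddCommGrpCat.{v}} {n : ℕ} {W Z : NExCplx C n} {ρ : NEext E W}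
    {δ : NEext E Z} (φ : ExangleMor E W Z ρ δ) [IsIso (φ.app (finLast n))]
    [Epi (F.map (W.d (Fin.last n)))] : Epi (F.map (Z.d (Fin.last n))) :=
  epi_of_epi_fac (f := F.map (φ.app (Fin.last n).castSucc))
    (h := F.map (W.d (Fin.last n)) ≫ F.map (φ.app (finLast n)))
    (by rw [← F.map_comp, ← F.map_comp, ← φ.comm (Fin.last n)]; rfl)

variable [Preadditive C] [HasBinaryBiproducts C] [HasZeroObject C]

theorem EFR_stable_pushforward_general {A' : Type u₂} [Category.{v₂} A'] [Abelian A']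
    (n : ℕ) (N : NExangulated C n) (F : C ⥤ A')
    (Xl X0 Y0 : C) (a0 : X0 ⟶ Y0)
    (δ : (N.E.obj (op Xl)).obj X0) (hδ : δ ∈ EFR N F Xl X0) :
    pushf N.E a0 δ ∈ EFR N F Xl Y0 := by
  intro Z hZ0 hZl hZ
  obtain ⟨W, hW0, hWl, hW⟩ := N.realize X0 Xl δ
  obtain ⟨φ, -, hφl⟩ := N.lift_exists hW hZ _ _
    (pushf_extCast_eq_pullb_extCast_pushf N.E a0 δ hW0 hWl hZ0 hZl)
  have : IsIso (φ.app (finLast n)) := hφl ▸ inferInstance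
  have : Epi (F.map (W.d (Fin.last n))) := hδ W hW0 hWl hW
  exact φ.epi_map_d_last F

/-- `E^F_R` is stable under pushforward in the covariant variable: if
`δ ∈ E^F_R(X_{n+1}, X₀)` and `a₀ : X₀ ⟶ Y₀`, then `(a₀)_*δ ∈ E^F_R(X_{n+1}, Y₀)`. -/
theorem EFR_stable_pushforward {A' : Type u₂} [Category.{v₂} A'] [Abelian A']
    (n : ℕ) (hn : 0 < n) (N : NExangulated C n) (F : C ⥤ A') [F.Additive]
    (hF : IsHalfExact N F) (Xl X0 Y0 : C) (a0 : X0 ⟶ Y0)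
    (δ : (N.E.obj (op Xl)).obj X0) (hδ : δ ∈ EFR N F Xl X0) :
    pushf N.E a0 δ ∈ EFR N F Xl Y0 :=
  EFR_stable_pushforward_general n N F Xl X0 Y0 a0 δ hδ

end NEx
end

section
/- Let (C, E, s) be an n-exangulated category and F : C → A a half exact functor. For δ, δ' ∈ E(X_{n+1}, X₀): if δ, δ' ∈ E^F_R(X_{n+1}, X₀) then δ ⊕ δ' ∈ E^F_R(X_{n+1} ⊕ X_{n+1}, X₀ ⊕ X₀), and consequently δ' − δ ∈ E^F_R(X_{n+1}, X₀); moreover 0 ∈ E^F_R(X_{n+1}, X₀). Hence E^F_R(X_{n+1}, X₀) is a subgroup of E(X_{n+1}, X₀). -/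
open CategoryTheory CategoryTheory.Limits Opposite

universe v u v₂ u₂

/-!
An extension `δ` lies in `E^F_R(X_{n+1}, X₀)` iff it is killed by pullback along some
`t : T ⟶ X_{n+1}` with `F t` epi: by exactness of `C(T, X_n) → C(T, X_{n+1}) → E(T, X₀)` for a
realization, `t^*δ = 0` means that `t` factors through the last differential, which itself kills
`δ`. This description gives `0` (take `t = 𝟙`) and `δ ⊕ δ'` (take `t ⊕ s`) at once.
For `δ' - δ` one needs that `E^F_R` is stable under pullback along any `c`: (EA2) applied to the
morphism `(𝟙, c)` from a realization of `c^*δ` to one of `δ` makes the mapping cone of the ladder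
distinguished, and half exactness of `F` at the penultimate term of that cone transfers
epimorphy of `F` of the last differential from the bottom row to the top row.
If then `t` kills `δ` and `s` kills `t^*δ'`, the composite `s ≫ t` kills `δ' - δ`.
-/
namespace NEx

variable {C : Type u} [Category.{v} C]

section Functoriality

variable {E : Cᵒᵖ ⥤ C ⥤ AddCommGrpCat.{v}}

@[simp]
lemma pushf_id {X A : C} (δ : (E.obj (op X)).obj A) : pushf E (𝟙 A) δ = δ := by
  simp [pushf]

@[simp]
lemma pullb_id {X A : C} (δ : (E.obj (op X)).obj A) : pullb E (𝟙 X) δ = δ := by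
  simp [pullb]

@[simp]
lemma pushf_pushf {X A A' A'' : C} (a : A ⟶ A') (b : A' ⟶ A'') (δ : (E.obj (op X)).obj A) :
    pushf E b (pushf E a δ) = pushf E (a ≫ b) δ := by
  simp [pushf]

@[simp]
lemma pullb_pullb {A X X' X'' : C} (c : X' ⟶ X) (c' : X'' ⟶ X') (δ : (E.obj (op X)).obj A) :
    pullb E c' (pullb E c δ) = pullb E (c' ≫ c) δ := by
  simp [pullb]

lemma pullb_pushf {A A' X X' : C} (a : A ⟶ A') (c : X' ⟶ X) (δ : (E.obj (op X)).obj A) :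
    pullb E c (pushf E a δ) = pushf E a (pullb E c δ) :=
  congrArg (fun (k : (E.obj (op X)).obj A ⟶ (E.obj (op X')).obj A') => k δ)
    ((E.map c.op).naturality a)

@[simp]
lemma extCast_self {A X : C} (hA : A = A) (hX : X = X) (δ : (E.obj (op X)).obj A) :
    extCast E hA hX δ = δ := by
  simp [extCast]

@[simp]
lemma pushf_zero {X A A' : C} (a : A ⟶ A') : pushf E a (0 : (E.obj (op X)).obj A) = 0 :=
  map_zero _

@[simp]
lemma pullb_zero {A X X' : C} (c : X' ⟶ X) : pullb E c (0 : (E.obj (op X)).obj A) = 0 :=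
  map_zero _

lemma pullb_add {A X X' : C} (c : X' ⟶ X) (x y : (E.obj (op X)).obj A) :
    pullb E c (x + y) = pullb E c x + pullb E c y :=
  map_add _ x y

lemma pullb_sub {A X X' : C} (c : X' ⟶ X) (x y : (E.obj (op X)).obj A) :
    pullb E c (x - y) = pullb E c x - pullb E c y :=
  map_sub _ x y

end Functoriality

section Additive

variable [Preadditive C] [HasBinaryBiproducts C]
  {A' : Type u₂} [Category.{v₂} A'] [Abelian A'] (F : C ⥤ A') [F.Additive]

instance epi_map_biprod_map {P Q P' Q' : C} (t : P ⟶ P') (s : Q ⟶ Q')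
    [Epi (F.map t)] [Epi (F.map s)] : Epi (F.map (biprod.map t s)) := by
  have := preservesBinaryBiproduct_of_preservesBiproduct F P Q
  have := preservesBinaryBiproduct_of_preservesBiproduct F P' Q'
  have : F.map (biprod.map t s) =
      (F.mapBiprod P Q).hom ≫ biprod.map (F.map t) (F.map s) ≫ (F.mapBiprod P' Q').inv := by
    rw [← Category.assoc, Iso.eq_comp_inv]
    apply biprod.hom_ext <;>
      simp only [Functor.mapBiprod_hom, Category.assoc, biprod.lift_fst, biprod.lift_snd,
        biprod.map_fst, biprod.map_snd, biprod.lift_fst_assoc, biprod.lift_snd_assoc,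
        ← F.map_comp]
  rw [this]
  infer_instance

variable {F} in
lemma epi_map_of_exact_biprod_desc {X Y M P Q R : C} {f : Y ⟶ P} {h : X ⟶ Y}
    {d : X ⟶ M} {b : M ⟶ R} (e : M ≅ P ⊞ Q) {φ : P ⟶ R} {g : Q ⟶ R}
    (hd : d ≫ e.hom ≫ biprod.fst = h ≫ f) (hb : e.inv ≫ b = biprod.desc φ g)
    {w : F.map d ≫ F.map b = 0} (hex : (ShortComplex.mk _ _ w).Exact) [Epi (F.map g)] :
    Epi (F.map f) := by
  have hbg : F.map (biprod.inr ≫ e.inv) ≫ F.map b = F.map g := by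
    rw [← F.map_comp, Category.assoc, hb, biprod.inr_desc]
  have : Epi (F.map b) := by
    have : Epi (F.map (biprod.inr ≫ e.inv) ≫ F.map b) := hbg ▸ inferInstance
    exact epi_of_epi (F.map (biprod.inr ≫ e.inv)) _
  refine Preadditive.epi_of_cancel_zero _ fun {Z} u hu => ?_
  let ubar := F.map (e.hom ≫ biprod.fst) ≫ u
  have hubar : F.map d ≫ ubar = 0 := by
    rw [← F.map_comp_assoc, hd, F.map_comp, Category.assoc, hu, comp_zero]
  have hv : F.map g ≫ hex.desc ubar hubar = 0 := by
    rw [← hbg, Category.assoc, hex.g_desc, ← F.map_comp_assoc]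
    simp only [Category.assoc, Iso.inv_hom_id_assoc, biprod.inr_fst, F.map_zero,
      zero_comp]
  have : ubar = 0 := by
    rw [← hex.g_desc ubar hubar, zero_of_epi_comp _ hv, comp_zero]
  have := congrArg (F.map (biprod.inl ≫ e.inv) ≫ ·) this
  simpa only [ubar, ← F.map_comp_assoc, Category.assoc, Iso.inv_hom_id_assoc, biprod.inl_fst,
    F.map_id, Category.id_comp, comp_zero] using this

end Additive

variable [Preadditive C] [HasBinaryBiproducts C]

section Cone

variable {m : ℕ} (A B : Fin (m + 2) → C) (f : ∀ i : Fin (m + 1), A i.castSucc ⟶ A i.succ)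
  (g : ∀ i : Fin (m + 1), B i.castSucc ⟶ B i.succ) (φ : ∀ i : Fin (m + 2), A i ⟶ B i)

lemma coneX_castSucc_last :
    coneX (m + 1) A B (Fin.last (m + 1)).castSucc =
      (A (Fin.last (m + 1)) ⊞ B (Fin.last m).castSucc) :=
  coneX_mid (m + 1) A B _ (Nat.succ_ne_zero m) le_rfl

lemma coneD_last :
    eqToHom (coneX_castSucc_last A B).symm ≫ coneD (m + 1) A B f g φ (Fin.last (m + 1)) =
      biprod.desc (φ (Fin.last (m + 1)) ≫ eqToHom (coneX_last (m + 1) A B).symm)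
        (g (Fin.last m) ≫ eqToHom (coneX_last (m + 1) A B).symm) := by
  apply biprod.hom_ext' <;> simp [coneD, Fin.last]

lemma coneD_castSucc_last_fst : ∃ k, coneD (m + 1) A B f g φ (Fin.last m).castSucc ≫
    eqToHom (coneX_castSucc_last A B) ≫ biprod.fst = k ≫ f (Fin.last m) := by
  rcases m with _ | m
  -- for `m = 0` the penultimate differential is the first one, `(-f₀, φ₀)ᵀ`
  · simp only [Fin.castSucc_zero, Fin.isValue, coneD, Fin.last_zero,
      Fin.coe_ofNat_eq_mod, Nat.zero_mod, ↓reduceDIte, zero_add, one_ne_zero,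
      Category.assoc, eqToHom_trans_assoc, eqToHom_refl, Category.id_comp, biprod.lift_fst,
      Preadditive.comp_neg]
    exact ⟨_, (Preadditive.neg_comp _ _).symm⟩
  · simp only [coneD, Fin.val_castSucc, Fin.val_last, Nat.add_eq_zero_iff, one_ne_zero,
      and_false, ↓reduceDIte, lt_add_iff_pos_right, Order.lt_one_iff, Nat.add_one_sub_one,
      Fin.succ_mk, Fin.castSucc_mk, eqToHom_refl, Category.comp_id, Category.assoc,
      eqToHom_trans_assoc, Category.id_comp]
    erw [biprod.lift_fst]
    exact ⟨_ ≫ (-biprod.fst), by simp only [biprod.desc_eq, Preadditive.comp_neg,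
      Preadditive.neg_comp, comp_zero, add_zero, Category.assoc]; rfl⟩

end Cone

variable [HasZeroObject C]

lemma epi_map_of_isHomotopyCartesian {A' : Type u₂} [Category.{v₂} A'] [Abelian A']
    {F : C ⥤ A'} [F.Additive] {m : ℕ} {N : NExangulated C (m + 1)}
    (hF : IsHalfExact N F) {A B : Fin (m + 2) → C}
    {f : ∀ i : Fin (m + 1), A i.castSucc ⟶ A i.succ}
    {g : ∀ i : Fin (m + 1), B i.castSucc ⟶ B i.succ} {φ : ∀ i : Fin (m + 2), A i ⟶ B i}
    {dl : (N.E.obj (op (B (Fin.last (m + 1))))).obj (A 0)}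
    (hcone : IsHomotopyCartesian (m + 1) N.E N.Distinguished A B f g φ dl)
    (hg : Epi (F.map (g (Fin.last m)))) : Epi (F.map (f (Fin.last m))) := by
  obtain ⟨w, hex⟩ := hF hcone (Fin.last m)
  obtain ⟨k, hk⟩ := coneD_castSucc_last_fst A B f g φ
  have : Epi (F.map (g (Fin.last m) ≫ eqToHom (coneX_last (m + 1) A B).symm)) := by
    rw [F.map_comp]; infer_instance
  exact epi_map_of_exact_biprod_desc (eqToIso (coneX_castSucc_last A B)) hk
    (coneD_last A B f g φ) hex

section EFR

variable {A' : Type u₂} [Category.{v₂} A'] {n : ℕ} {N : NExangulated C n} {F : C ⥤ A'}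

lemma mem_EFR_iff {Xl X0 : C} {δ : (N.E.obj (op Xl)).obj X0} :
    δ ∈ EFR N F Xl X0 ↔ ∃ (T : C) (t : T ⟶ Xl), Epi (F.map t) ∧ pullb N.E t δ = 0 := by
  constructor
  · intro hδ
    obtain ⟨Z, rfl, rfl, hZ⟩ := N.realize X0 Xl δ
    rw [extCast_self] at hZ
    exact ⟨_, Z.d (Fin.last n), hδ Z rfl rfl (by rwa [extCast_self]),
      (N.exact_contra_last hZ _ _).mpr ⟨𝟙 _, Category.id_comp _⟩⟩
  · rintro ⟨T, t, ht, htδ⟩ Z rfl rfl hZ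
    rw [extCast_self] at hZ
    obtain ⟨h, rfl⟩ := (N.exact_contra_last hZ T t).mp htδ
    rw [F.map_comp] at ht
    exact epi_of_epi (F.map h) _

lemma zero_mem_EFR (Xl X0 : C) : (0 : (N.E.obj (op Xl)).obj X0) ∈ EFR N F Xl X0 :=
  mem_EFR_iff.mpr ⟨Xl, 𝟙 Xl, by rw [F.map_id]; infer_instance, pullb_zero _⟩

variable [Abelian A'] [F.Additive]

lemma biprod_mem_EFR {Xl X0 : C} {δ δ' : (N.E.obj (op Xl)).obj X0}
    (hδ : δ ∈ EFR N F Xl X0) (hδ' : δ' ∈ EFR N F Xl X0) :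
    pushf N.E biprod.inl (pullb N.E biprod.fst δ) +
      pushf N.E biprod.inr (pullb N.E biprod.snd δ') ∈ EFR N F (Xl ⊞ Xl) (X0 ⊞ X0) := by
  obtain ⟨T, t, ht, htδ⟩ := mem_EFR_iff.mp hδ
  obtain ⟨S, s, hs, hsδ'⟩ := mem_EFR_iff.mp hδ'
  refine mem_EFR_iff.mpr ⟨T ⊞ S, biprod.map t s, inferInstance, ?_⟩
  rw [pullb_add, pullb_pushf, pullb_pushf, pullb_pullb, pullb_pullb, biprod.map_fst,
    biprod.map_snd, ← pullb_pullb, ← pullb_pullb, htδ, hsδ']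
  simp

lemma pullb_mem_EFR (hn : 0 < n) (hF : IsHalfExact N F) {Xl X0 Y : C}
    {δ : (N.E.obj (op Xl)).obj X0} (hδ : δ ∈ EFR N F Xl X0) (c : Y ⟶ Xl) :
    pullb N.E c δ ∈ EFR N F Y X0 := by
  obtain ⟨m, rfl⟩ : ∃ m, n = m + 1 := ⟨n - 1, by omega⟩
  rintro V rfl rfl hV
  rw [extCast_self] at hV
  obtain ⟨Z, hZ0, rfl, hZ⟩ := N.realize _ _ δ
  obtain ⟨φ, -, -, hcone⟩ := N.ea2 V Z _ _ hV hZ hZ0.symm c (by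
    simp only [extCast, eqToHom_refl, pullb_id]; exact (pullb_pushf _ _ _).symm)
  exact epi_map_of_isHomotopyCartesian hF hcone (hδ Z hZ0 rfl hZ)

lemma sub_mem_EFR (hn : 0 < n) (hF : IsHalfExact N F) {Xl X0 : C}
    {x y : (N.E.obj (op Xl)).obj X0} (hx : x ∈ EFR N F Xl X0) (hy : y ∈ EFR N F Xl X0) :
    y - x ∈ EFR N F Xl X0 := by
  obtain ⟨T, t, ht, htx⟩ := mem_EFR_iff.mp hx
  obtain ⟨S, s, hs, hsy⟩ := mem_EFR_iff.mp (pullb_mem_EFR hn hF hy t)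
  refine mem_EFR_iff.mpr ⟨S, s ≫ t, by rw [F.map_comp]; infer_instance, ?_⟩
  rw [← pullb_pullb, pullb_sub, pullb_sub, hsy, htx, pullb_zero, sub_zero]

end EFR

/-- `E^F_R(X_{n+1}, X₀)` is a subgroup of `E(X_{n+1}, X₀)`: it contains `0`, it
is stable under direct sums `δ ⊕ δ'` (formed via the biadditivity of `E`), and
consequently under differences `δ' - δ`. -/
theorem EFR_subgroup {A' : Type u₂} [Category.{v₂} A'] [Abelian A']
    (n : ℕ) (hn : 0 < n) (N : NExangulated C n) (F : C ⥤ A') [F.Additive]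
    (hF : IsHalfExact N F) (Xl X0 : C) (δ δ' : (N.E.obj (op Xl)).obj X0)
    (hδ : δ ∈ EFR N F Xl X0) (hδ' : δ' ∈ EFR N F Xl X0) :
    (pushf N.E (biprod.inl : X0 ⟶ X0 ⊞ X0) (pullb N.E (biprod.fst : Xl ⊞ Xl ⟶ Xl) δ) +
      pushf N.E (biprod.inr : X0 ⟶ X0 ⊞ X0) (pullb N.E (biprod.snd : Xl ⊞ Xl ⟶ Xl) δ')
      ∈ EFR N F (Xl ⊞ Xl) (X0 ⊞ X0)) ∧
    δ' - δ ∈ EFR N F Xl X0 ∧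
    (0 : (N.E.obj (op Xl)).obj X0) ∈ EFR N F Xl X0 ∧
    ∃ G : AddSubgroup ((N.E.obj (op Xl)).obj X0),
      (G : Set ((N.E.obj (op Xl)).obj X0)) = EFR N F Xl X0 :=
  ⟨biprod_mem_EFR hδ hδ', sub_mem_EFR hn hF hδ hδ', zero_mem_EFR Xl X0,
    AddSubgroup.ofSub _ ⟨0, zero_mem_EFR Xl X0⟩ (fun x hx y hy => by
      simpa [sub_eq_add_neg] using sub_mem_EFR hn hF hy hx), rfl⟩

end NEx
end
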